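/- arXiv:1211.3868 — 4 statements merged into one kernel-verified Lean document; each statement's English description precedes it below -/
import Mathlib

section
/- Let X be a càdlàg function and c > 0. Define stopping-type times T_{u,0} = inf{s ≥ 0 : sup_{t∈[0,s]} X(t) − X(0) > c}, and recursively T_{d,k} = inf{s ≥ T_{u,k} : sup_{t∈[T_{u,k},s]} X(t) − X(s) > 2c}, T_{u,k+1} = inf{s ≥ T_{d,k} : X(s) − inf_{t∈[T_{d,k},s]} X(t) > 2c}. Then for every s > 0 there exists K < ∞ such that T_{u,K} > s or T_{d,K} > s; i.e., only finitely many of these times lie in any compact interval. -/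
open Set Filter MeasureTheory
open scoped ENNReal NNReal Topology

noncomputable section

/-- A function is càdlàg: right-continuous with left limits. -/
def Cadlag (f : ℝ → ℝ) : Prop :=
  (∀ t : ℝ, Tendsto f (nhdsWithin t (Ici t)) (nhds (f t))) ∧
  (∀ t : ℝ, ∃ l : ℝ, Tendsto f (nhdsWithin t (Iio t)) (nhds l))

/-- Jump of `f` at `s`. -/
def jumpAt (f : ℝ → ℝ) (s : ℝ) : ℝ := f s - Function.leftLim f s

def supOn (f : ℝ → ℝ) (a b : ℝ) : ℝ := sSup (f '' Icc a b)
def infOn (f : ℝ → ℝ) (a b : ℝ) : ℝ := sInf (f '' Icc a b)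

def TuZero (X : ℝ → ℝ) (c : ℝ) : ℝ≥0∞ :=
  sInf {u | ∃ s : ℝ, 0 ≤ s ∧ u = ENNReal.ofReal s ∧ supOn X 0 s - X 0 > c}

def TdIni (X : ℝ → ℝ) (c : ℝ) : ℝ≥0∞ :=
  sInf {u | ∃ s : ℝ, 0 ≤ s ∧ u = ENNReal.ofReal s ∧ X 0 - infOn X 0 s > c}

def nextTd (X : ℝ → ℝ) (c : ℝ) (a : ℝ≥0∞) : ℝ≥0∞ :=
  sInf {u | ∃ s : ℝ, 0 ≤ s ∧ a ≤ ENNReal.ofReal s ∧ u = ENNReal.ofReal s ∧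
    supOn X a.toReal s - X s > 2 * c}

def nextTu (X : ℝ → ℝ) (c : ℝ) (a : ℝ≥0∞) : ℝ≥0∞ :=
  sInf {u | ∃ s : ℝ, 0 ≤ s ∧ a ≤ ENNReal.ofReal s ∧ u = ENNReal.ofReal s ∧
    X s - infOn X a.toReal s > 2 * c}

def TuTd (X : ℝ → ℝ) (c : ℝ) : ℕ → ℝ≥0∞ × ℝ≥0∞
  | 0 => (TuZero X c, nextTd X c (TuZero X c))
  | (n + 1) =>
      let tu := nextTu X c (TuTd X c n).2
      (tu, nextTd X c tu)

def Tu (X : ℝ → ℝ) (c : ℝ) (n : ℕ) : ℝ≥0∞ := (TuTd X c n).1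
def Td (X : ℝ → ℝ) (c : ℝ) (n : ℕ) : ℝ≥0∞ := (TuTd X c n).2

open Classical in
/-- The finite variation approximation `X^c` from the paper's construction. -/
def Xc (X : ℝ → ℝ) (c : ℝ) (s : ℝ) : ℝ :=
  if ENNReal.ofReal s < Tu X c 0 then X 0
  else if h : ∃ k, Tu X c k ≤ ENNReal.ofReal s ∧ ENNReal.ofReal s < Td X c k then
    supOn X (Tu X c (Nat.find h)).toReal s - c
  else if h' : ∃ k, Td X c k ≤ ENNReal.ofReal s ∧ ENNReal.ofReal s < Tu X c (k + 1) then
    infOn X (Td X c (Nat.find h')).toReal s + c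
  else 0

/-- Truncated variation at level `c` on `[0, T]`. -/
def TVtrunc (f : ℝ → ℝ) (c T : ℝ) : ℝ≥0∞ :=
  ⨆ (n : ℕ) (t : ℕ → ℝ) (_ : Monotone t) (_ : ∀ i, t i ∈ Icc (0 : ℝ) T),
    ∑ i ∈ Finset.range n, ENNReal.ofReal (|f (t (i + 1)) - f (t i)| - c)

/-- Upward truncated variation at level `c` on `[0, T]`. -/
def UTVtrunc (f : ℝ → ℝ) (c T : ℝ) : ℝ≥0∞ :=
  ⨆ (n : ℕ) (t : ℕ → ℝ) (_ : Monotone t) (_ : ∀ i, t i ∈ Icc (0 : ℝ) T),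
    ∑ i ∈ Finset.range n, ENNReal.ofReal (f (t (i + 1)) - f (t i) - c)

/-- Downward truncated variation at level `c` on `[0, T]`. -/
def DTVtrunc (f : ℝ → ℝ) (c T : ℝ) : ℝ≥0∞ :=
  ⨆ (n : ℕ) (t : ℕ → ℝ) (_ : Monotone t) (_ : ∀ i, t i ∈ Icc (0 : ℝ) T),
    ∑ i ∈ Finset.range n, ENNReal.ofReal (f (t i) - f (t (i + 1)) - c)

/-- Left-endpoint Riemann–Stieltjes sum of `f` against `g` over the dyadic
partition of `[0, t]` with `2 ^ n` pieces. -/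
def RSsum (f g : ℝ → ℝ) (t : ℝ) (n : ℕ) : ℝ :=
  ∑ i ∈ Finset.range (2 ^ n),
    f (t * i / 2 ^ n) * (g (t * (i + 1) / 2 ^ n) - g (t * i / 2 ^ n))

/-- Pathwise Lebesgue–Stieltjes integral `∫_0^t f_- dg`, realized as the limit of
left-endpoint Riemann–Stieltjes sums along dyadic partitions. -/
def LSint (f g : ℝ → ℝ) (t : ℝ) : ℝ := limUnder atTop (fun n => RSsum f g t n)

/-- Discrete covariation sums along dyadic partitions. -/
def QVsum (f g : ℝ → ℝ) (t : ℝ) (n : ℕ) : ℝ :=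
  ∑ i ∈ Finset.range (2 ^ n),
    (f (t * (i + 1) / 2 ^ n) - f (t * i / 2 ^ n)) *
      (g (t * (i + 1) / 2 ^ n) - g (t * i / 2 ^ n))

/-- Sum of products of jumps `∑_{0 < s ≤ t} Δf Δg`. -/
def jumpSum (f g : ℝ → ℝ) (t : ℝ) : ℝ :=
  ∑' s : ℝ, Set.indicator (Ioc (0 : ℝ) t) (fun u => jumpAt f u * jumpAt g u) s

/-- A local martingale: there is a localizing sequence of stopping times. -/
def IsLocalMartingale {Ω : Type*} [m : MeasurableSpace Ω] (F : Filtration ℝ m)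
    (P : Measure Ω) (M : ℝ → Ω → ℝ) : Prop :=
  ∃ τ : ℕ → Ω → ℝ, (∀ n, IsStoppingTime F (fun ω => ((τ n ω : ℝ) : WithTop ℝ))) ∧
    (∀ ω, Tendsto (fun n => τ n ω) atTop atTop) ∧
    ∀ n, Martingale (stoppedProcess M (fun ω => ((τ n ω : ℝ) : WithTop ℝ))) F P

/-- A (càdlàg) semimartingale: adapted, càdlàg, and decomposable as a local
martingale plus an adapted càdlàg process of locally finite variation. -/
def IsSemimartingale {Ω : Type*} [m : MeasurableSpace Ω] (F : Filtration ℝ m)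
    (P : Measure Ω) (X : ℝ → Ω → ℝ) : Prop :=
  Adapted F X ∧ (∀ ω, Cadlag fun t => X t ω) ∧
  ∃ M A : ℝ → Ω → ℝ, (∀ t ω, X t ω = M t ω + A t ω) ∧
    IsLocalMartingale F P M ∧ Adapted F A ∧ (∀ ω, Cadlag fun t => A t ω) ∧
    (∀ ω, ∀ T > (0 : ℝ), eVariationOn (fun t => A t ω) (Icc 0 T) < ⊤)

/-- The filtration satisfies the usual hypotheses w.r.t. `P`:
right-continuity and completeness. -/
def UsualConditions {Ω : Type*} [m : MeasurableSpace Ω] (F : Filtration ℝ m)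
    (P : Measure Ω) : Prop :=
  (∀ t : ℝ, F t = ⨅ (s : ℝ) (_ : t < s), F s) ∧
  (∀ t : ℝ, ∀ s : Set Ω, P s = 0 → MeasurableSet[F t] s)

/-- Uniform convergence on compacts in probability, as `c ↓ 0`. -/
def UCP {Ω : Type*} [m : MeasurableSpace Ω] (P : Measure Ω)
    (Fc : ℝ → ℝ → Ω → ℝ) (G : ℝ → Ω → ℝ) : Prop :=
  ∀ T > (0 : ℝ), ∀ ε > (0 : ℝ),
    Tendsto (fun c => P {ω | ε ≤ ⨆ t : Icc (0 : ℝ) T, |Fc c t ω - G t ω|})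
      (nhdsWithin 0 (Ioi 0)) (nhds 0)

/-- Standard Brownian motion started at `0`. -/
def IsStandardBM {Ω : Type*} [m : MeasurableSpace Ω] (P : Measure Ω)
    (B : ℝ → Ω → ℝ) : Prop :=
  (∀ ω, B 0 ω = 0) ∧ (∀ ω, Continuous fun t => B t ω) ∧
  (∀ t, Measurable (B t)) ∧
  (∀ s t : ℝ, 0 ≤ s → s ≤ t →
    P.map (fun ω => B t ω - B s ω) = ProbabilityTheory.gaussianReal 0 ((t - s).toNNReal)) ∧
  (∀ n : ℕ, ∀ t : Fin (n + 1) → ℝ, Monotone t → (∀ i, 0 ≤ t i) →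
    ProbabilityTheory.iIndepFun
      (fun (i : Fin n) ω => B (t i.succ) ω - B (t i.castSucc) ω) P)

/-- Natural σ-algebra of the process `B` up to time `t`. -/
def naturalSigma {Ω : Type*} (B : ℝ → Ω → ℝ) (t : ℝ) : MeasurableSpace Ω :=
  ⨆ s ∈ Iic t, MeasurableSpace.comap (B s) inferInstance

/-!
If all the times stayed below `s`, they would be finite and, by right-continuity, strictly
increasing, since `X` moves by less than `c` just after any time. They would then converge to
some `L` from below. Just before `L`, `X` stays within `c` of its left limit at `L`, so for large
`k` it oscillates by less than `2c` on `[T_{u,k}, L)`, which forces `T_{d,k} ≥ L ≥ T_{u,k+1}`.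
-/

lemma supOn_neg (X : ℝ → ℝ) (a b : ℝ) : supOn (-X) a b = -infOn X a b := by
  rw [supOn, infOn, ← Real.sSup_neg, ← image_neg_eq_neg, image_image]
  rfl

lemma nextTu_eq_nextTd_neg (X : ℝ → ℝ) (c : ℝ) (a : ℝ≥0∞) :
    nextTu X c a = nextTd (-X) c a := by
  simp only [nextTu, nextTd, supOn_neg, Pi.neg_apply, neg_sub_neg]

lemma supOn_sub_lt_of_forall_abs_sub_lt {X : ℝ → ℝ} {a t m c : ℝ} (hat : a ≤ t)
    (h : ∀ r ∈ Icc a t, |X r - m| < c) : supOn X a t - X t < 2 * c := by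
  have hsup : supOn X a t ≤ m + c :=
    csSup_le ((nonempty_Icc.2 hat).image X)
      (forall_mem_image.2 fun r hr => by linarith [(abs_lt.1 (h r hr)).2])
  linarith [(abs_lt.1 (h t ⟨hat, le_rfl⟩)).1]

lemma ofReal_le_nextTd {X : ℝ → ℝ} {c m b : ℝ} {a : ℝ≥0∞}
    (h : ∀ r ∈ Ico a.toReal b, |X r - m| < c) : ENNReal.ofReal b ≤ nextTd X c a := by
  refine le_sInf ?_
  rintro _ ⟨t, ht0, hat, rfl, hosc⟩
  by_contra! htb
  have htb : t < b := (ENNReal.ofReal_lt_ofReal_iff'.1 htb).1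
  have hat : a.toReal ≤ t := ENNReal.toReal_le_of_le_ofReal ht0 hat
  exact lt_asymm hosc <|
    supOn_sub_lt_of_forall_abs_sub_lt hat fun r hr => h r ⟨hr.1, hr.2.trans_lt htb⟩

lemma lt_nextTd {X : ℝ → ℝ} {c : ℝ} (hc : 0 < c) {a : ℝ≥0∞} (ha : a ≠ ∞)
    (hX : ContinuousWithinAt X (Ici a.toReal) a.toReal) : a < nextTd X c a := by
  obtain ⟨δ, hδ, hX⟩ := Metric.continuousWithinAt_iff.1 hX c hc
  calc a < ENNReal.ofReal (a.toReal + δ) := (ENNReal.lt_ofReal_iff_toReal_lt ha).2 (by linarith)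
    _ ≤ nextTd X c a := ofReal_le_nextTd fun r hr => hX hr.1 <| by
        rw [Real.dist_eq, abs_of_nonneg (sub_nonneg.2 hr.1)]
        linarith [hr.2]

lemma lt_nextTu {X : ℝ → ℝ} {c : ℝ} (hc : 0 < c) {a : ℝ≥0∞} (ha : a ≠ ∞)
    (hX : ContinuousWithinAt X (Ici a.toReal) a.toReal) : a < nextTu X c a :=
  nextTu_eq_nextTd_neg X c a ▸ lt_nextTd hc ha hX.neg

lemma eventually_forall_Ico_of_eventually_nhdsLT {p : ℝ → Prop} {L : ℝ}
    (h : ∀ᶠ r in 𝓝[<] L, p r) : ∀ᶠ a in 𝓝[<] L, ∀ r ∈ Ico a L, p r := by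
  obtain ⟨l, hl, hsub⟩ := mem_nhdsLT_iff_exists_Ioo_subset.1 h
  filter_upwards [Ioo_mem_nhdsLT hl] with a ha r hr
  exact hsub ⟨ha.1.trans_le hr.1, hr.2⟩

lemma StrictMono.tendsto_nhdsLT_ciSup {u : ℕ → ℝ} (hu : StrictMono u)
    (hbdd : BddAbove (range u)) :
    Tendsto u atTop (𝓝[<] ⨆ k, u k) :=
  tendsto_nhdsWithin_iff.2 ⟨tendsto_atTop_ciSup hu.monotone hbdd,
    Eventually.of_forall fun k => (hu k.lt_succ_self).trans_le (le_ciSup hbdd _)⟩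

lemma Td_eq_nextTd (X : ℝ → ℝ) (c : ℝ) (k : ℕ) : Td X c k = nextTd X c (Tu X c k) := by
  cases k <;> rfl

lemma Tu_succ (X : ℝ → ℝ) (c : ℝ) (k : ℕ) : Tu X c (k + 1) = nextTu X c (Td X c k) := rfl

theorem stmt_1_general (X : ℝ → ℝ) (hX : Cadlag X) (c : ℝ) (hc : 0 < c) (s : ℝ) :
    ∃ K : ℕ, ENNReal.ofReal s < Tu X c K ∨ ENNReal.ofReal s < Td X c K := by
  by_contra! hle
  have hTu_ne_top k : Tu X c k ≠ ∞ := ne_top_of_le_ne_top ENNReal.ofReal_ne_top (hle k).1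
  have hTd_ne_top k : Td X c k ≠ ∞ := ne_top_of_le_ne_top ENNReal.ofReal_ne_top (hle k).2
  have hTd_lt_Tu k : Td X c k < Tu X c (k + 1) :=
    (Tu_succ X c k).symm ▸ lt_nextTu hc (hTd_ne_top k) (hX.1 _)
  have hTu_lt_Tu k : Tu X c k < Tu X c (k + 1) :=
    ((Td_eq_nextTd X c k).symm ▸ lt_nextTd hc (hTu_ne_top k) (hX.1 _)).trans (hTd_lt_Tu k)
  set u : ℕ → ℝ := fun k => (Tu X c k).toReal
  have hu : StrictMono u := strictMono_nat_of_lt_succ fun k =>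
    (ENNReal.toReal_lt_toReal (hTu_ne_top k) (hTu_ne_top (k + 1))).2 (hTu_lt_Tu k)
  have hbdd : BddAbove (range u) :=
    ⟨_, forall_mem_range.2 fun k => ENNReal.toReal_mono ENNReal.ofReal_ne_top (hle k).1⟩
  set L := ⨆ k, u k
  obtain ⟨l, hl⟩ := hX.2 L
  obtain ⟨k, hk⟩ := ((hu.tendsto_nhdsLT_ciSup hbdd).eventually
    (eventually_forall_Ico_of_eventually_nhdsLT (hl.eventually (Metric.ball_mem_nhds l hc)))).exists
  have hL_le_Td : ENNReal.ofReal L ≤ Td X c k := Td_eq_nextTd X c k ▸ ofReal_le_nextTd hk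
  have hTu_le_L : Tu X c (k + 1) ≤ ENNReal.ofReal L := by
    rw [← ENNReal.ofReal_toReal (hTu_ne_top (k + 1))]
    exact ENNReal.ofReal_le_ofReal (le_ciSup hbdd (k + 1))
  exact (hL_le_Td.trans_lt (hTd_lt_Tu k)).not_ge hTu_le_L

/-- only finitely many of the times `T_{u,k}, T_{d,k}` lie in any
compact interval: for every `s > 0` there is `K` with `T_{u,K} > s` or `T_{d,K} > s`. -/
theorem stmt_1 (X : ℝ → ℝ) (hX : Cadlag X) (c : ℝ) (hc : 0 < c) (s : ℝ) (hs : 0 < s) :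
    ∃ K : ℕ, ENNReal.ofReal s < Tu X c K ∨ ENNReal.ofReal s < Td X c K :=
  stmt_1_general X hX c hc s

end
end

section
/- For any functions f, g : [0,T] → ℝ with |f(t) − g(t)| ≤ c for all t, the truncated variation of f at level 2c is at most the total variation of g: TV^{2c}(f, T) ≤ TV(g, T), where TV^{2c}(f,T) = sup_n sup_{0≤t_1<...<t_n≤T} Σ max{|f(t_i) − f(t_{i−1})| − 2c, 0}. -/
open Set Filter MeasureTheory
open scoped ENNReal NNReal Topology

noncomputable section

theorem dist_sub_two_mul_le_dist_of_dist_le {α : Type*} [PseudoMetricSpace α] {x y x' y' : α}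
    {c : ℝ} (hx : dist x x' ≤ c) (hy : dist y y' ≤ c) : dist x y - 2 * c ≤ dist x' y' := by
  linarith [dist_triangle4 x x' y' y, dist_comm y y']

theorem stmt_5_general (f g : ℝ → ℝ) (c T : ℝ)
    (hfg : ∀ t ∈ Icc (0 : ℝ) T, |f t - g t| ≤ c) :
    TVtrunc f (2 * c) T ≤ eVariationOn g (Icc 0 T) := by
  have hdist : ∀ t ∈ Icc (0 : ℝ) T, dist (f t) (g t) ≤ c := by simpa only [Real.dist_eq] using hfg
  refine iSup_le fun n => iSup_le fun t => iSup_le fun ht => iSup_le fun hmem => ?_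
  calc ∑ i ∈ Finset.range n, ENNReal.ofReal (|f (t (i + 1)) - f (t i)| - 2 * c)
      ≤ ∑ i ∈ Finset.range n, edist (g (t (i + 1))) (g (t i)) := by
        refine Finset.sum_le_sum fun i _ => ?_
        rw [edist_dist, ← Real.dist_eq]
        exact ENNReal.ofReal_le_ofReal <|
          dist_sub_two_mul_le_dist_of_dist_le (hdist _ (hmem (i + 1))) (hdist _ (hmem i))
    _ ≤ eVariationOn g (Icc 0 T) := eVariationOn.sum_le (f := g) (n := n) ht hmem

/-- if `g` stays uniformly within `c` of `f` on `[0,T]`, then the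
truncated variation of `f` at level `2c` is bounded by the total variation of `g`. -/
theorem stmt_5 (f g : ℝ → ℝ) (c T : ℝ) (hc : 0 < c)
    (hfg : ∀ t ∈ Icc (0 : ℝ) T, |f t - g t| ≤ c) :
    TVtrunc f (2 * c) T ≤ eVariationOn g (Icc 0 T) :=
  stmt_5_general f g c T hfg

end
end

section
/- For any c > 0 and any càdlàg function X, the upward and downward truncated variations satisfy the decomposition TV^c(X,T) = UTV^c(X,T) + DTV^c(X,T), where UTV^c(X,T) = sup_n sup_{0≤t_1<...<t_n≤T} Σ max{X(t_i) − X(t_{i−1}) − c, 0}, DTV^c(X,T) = sup_n sup_{0≤t_1<...<t_n≤T} Σ max{X(t_{i−1}) − X(t_i) − c, 0}, and TV^c(X,T) = sup_n sup Σ max{|X(t_i) − X(t_{i−1})| − c, 0}. -/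
open Set Filter MeasureTheory
open scoped ENNReal NNReal Topology

noncomputable section

/-! `TV^c ≤ UTV^c + DTV^c` holds termwise, since `(|d| - c)⁺ = (d - c)⁺ + (-d - c)⁺` for `c ≥ 0`.

For the converse take an upward chain `s` and a downward chain `u` in `[0, R]` and induct on the
total number of steps; a step with negative gain contributes nothing and is dropped. Downward steps
of `X` are upward steps of `-X`, so we may assume that the last step to end is the downward one
`p → q`. If `p` lies after every upward step, that step is split off by the superadditivity
`TV^c[0, p] + (|X q - X p| - c)⁺ ≤ TV^c[0, R]`. Otherwise it overlaps the last upward step `a → b`,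
`p < b ≤ q`, and `(X b - X a - c) + (X p - X q - c) = (X p - X a - c) + (X b - X q - c)`: the step
between `a` and `p`, upward or downward, joins the chains inside `[0, b]`, and `b → q` is split off
as before. -/

def chainSum (φ : ℝ → ℝ → ℝ≥0∞) (n : ℕ) (t : ℕ → ℝ) : ℝ≥0∞ :=
  ∑ i ∈ Finset.range n, φ (t i) (t (i + 1))

def chainSup (φ : ℝ → ℝ → ℝ≥0∞) (R : ℝ) : ℝ≥0∞ :=
  ⨆ (n : ℕ) (t : ℕ → ℝ) (_ : Monotone t) (_ : ∀ i, t i ∈ Icc (0 : ℝ) R), chainSum φ n t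

def withTail (t : ℕ → ℝ) (k : ℕ) (x : ℝ) (i : ℕ) : ℝ := if i ≤ k then t i else x

section Chains

variable {φ : ℝ → ℝ → ℝ≥0∞} {t : ℕ → ℝ} {i k : ℕ} {x r R : ℝ}

lemma chainSum_succ (φ : ℝ → ℝ → ℝ≥0∞) (n : ℕ) (t : ℕ → ℝ) :
    chainSum φ (n + 1) t = chainSum φ n t + φ (t n) (t (n + 1)) :=
  Finset.sum_range_succ _ _

lemma chainSum_mono {ψ : ℝ → ℝ → ℝ≥0∞} (h : ∀ a b, φ a b ≤ ψ a b) (n : ℕ) (t : ℕ → ℝ) :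
    chainSum φ n t ≤ chainSum ψ n t :=
  Finset.sum_le_sum fun _ _ => h _ _

lemma withTail_of_le (h : i ≤ k) : withTail t k x i = t i := if_pos h

lemma withTail_of_lt (h : k < i) : withTail t k x i = x := if_neg (not_le.2 h)

lemma Monotone.withTail (ht : Monotone t) (hx : t k ≤ x) : Monotone (withTail t k x) := by
  intro i j hij
  unfold _root_.withTail
  split_ifs with hi hj hj
  · exact ht hij
  · exact (ht hi).trans hx
  · omega
  · exact le_rfl

lemma withTail_mem_Icc (ht : Monotone t) (h0 : 0 ≤ t 0) (hx : t k ≤ x) (hxr : x ≤ r) (i : ℕ) :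
    withTail t k x i ∈ Icc 0 r := by
  have hmono := ht.withTail hx
  refine ⟨h0.trans ?_, (hmono (le_max_left i (k + 1))).trans ?_⟩
  · simpa only [withTail_of_le (Nat.zero_le k)] using hmono (Nat.zero_le i)
  · rw [withTail_of_lt (by omega)]
    exact hxr

lemma chainSum_withTail (φ : ℝ → ℝ → ℝ≥0∞) (t : ℕ → ℝ) (k : ℕ) (x : ℝ) :
    chainSum φ k (withTail t k x) = chainSum φ k t :=
  Finset.sum_congr rfl fun i hi => by
    rw [Finset.mem_range] at hi
    rw [withTail_of_le hi.le, withTail_of_le hi]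

lemma chainSum_succ_withTail (φ : ℝ → ℝ → ℝ≥0∞) (t : ℕ → ℝ) (k : ℕ) (x : ℝ) :
    chainSum φ (k + 1) (withTail t k x) = chainSum φ k t + φ (t k) x := by
  rw [chainSum_succ, chainSum_withTail, withTail_of_le le_rfl, withTail_of_lt k.lt_succ_self]

lemma le_chainSup (ht : Monotone t) (htR : ∀ i, t i ∈ Icc 0 R) (n : ℕ) :
    chainSum φ n t ≤ chainSup φ R :=
  le_iSup_of_le n <| le_iSup_of_le t <| le_iSup_of_le ht <| le_iSup_of_le htR le_rfl

lemma chainSup_le {a : ℝ≥0∞}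
    (h : ∀ n t, Monotone t → (∀ i, t i ∈ Icc 0 R) → chainSum φ n t ≤ a) : chainSup φ R ≤ a :=
  iSup_le fun n => iSup_le fun t => iSup_le fun ht => iSup_le fun htR => h n t ht htR

lemma chainSup_add_le_of_forall {y a : ℝ≥0∞} (hy : y ≤ a)
    (h : ∀ n t, Monotone t → (∀ i, t i ∈ Icc 0 R) → chainSum φ n t + y ≤ a) :
    chainSup φ R + y ≤ a := by
  rw [chainSup, ENNReal.iSup_add]
  refine iSup_le fun n => ?_
  rw [ENNReal.iSup_add]
  refine iSup_le fun t => ?_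
  by_cases ht : Monotone t ∧ ∀ i, t i ∈ Icc 0 R
  · simpa only [iSup_pos ht.1, iSup_pos ht.2] using h n t ht.1 ht.2
  · simpa only [iSup_and', iSup_neg ht, bot_eq_zero, zero_add] using hy

lemma chainSup_add_chainSup_le {ψ : ℝ → ℝ → ℝ≥0∞} {a : ℝ≥0∞}
    (h : ∀ n m s u, Monotone s → Monotone u → (∀ i, s i ∈ Icc 0 R) → (∀ i, u i ∈ Icc 0 R) →
      chainSum φ n s + chainSum ψ m u ≤ a) :
    chainSup φ R + chainSup ψ R ≤ a := by
  refine chainSup_add_le_of_forall (chainSup_le fun m u hu huR => ?_) fun n s hs hsR => ?_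
  · simpa [chainSum] using h 0 m u u hu hu huR huR
  rw [add_comm]
  refine chainSup_add_le_of_forall ?_ fun m u hu huR =>
    add_comm (chainSum φ n s) _ ▸ h n m s u hs hu hsR huR
  simpa [chainSum] using h n 0 s s hs hs hsR hsR

lemma chainSup_add_le_add (φ ψ : ℝ → ℝ → ℝ≥0∞) (R : ℝ) :
    chainSup (φ + ψ) R ≤ chainSup φ R + chainSup ψ R :=
  chainSup_le fun n t ht htR => by
    simp only [chainSum, Pi.add_apply, Finset.sum_add_distrib]
    exact add_le_add (le_chainSup ht htR n) (le_chainSup ht htR n)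

lemma chainSup_add_apply_le {p q : ℝ} (hrp : r ≤ p) (hp : 0 ≤ p) (hpq : p ≤ q) (hqR : q ≤ R) :
    chainSup φ r + φ p q ≤ chainSup φ R := by
  refine chainSup_add_le_of_forall ?_ fun n t ht htr => ?_
  · have := le_chainSup (φ := φ) (monotone_const.withTail (k := 0) hpq)
      (withTail_mem_Icc monotone_const hp hpq hqR) 1
    rwa [chainSum_succ_withTail, chainSum, Finset.sum_range_zero, zero_add] at this
  set t' := withTail t n p
  have ht' : Monotone t' := ht.withTail ((htr n).2.trans hrp)
  have ht'n : t' (n + 1) = p := withTail_of_lt n.lt_succ_self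
  have ht'0 : 0 ≤ t' 0 := (htr 0).1.trans_eq (withTail_of_le n.zero_le).symm
  calc chainSum φ n t + φ p q
      ≤ chainSum φ n t + φ (t n) p + φ p q := by gcongr; exact le_self_add
    _ = chainSum φ (n + 2) (withTail t' (n + 1) q) := by
        rw [chainSum_succ_withTail, chainSum_succ_withTail, ht'n]
    _ ≤ chainSup φ R :=
        le_chainSup (ht'.withTail (ht'n ▸ hpq)) (withTail_mem_Icc ht' ht'0 (ht'n ▸ hpq) hqR) _

end Chains

def truncInc (f : ℝ → ℝ) (c a b : ℝ) : ℝ≥0∞ := ENNReal.ofReal (f b - f a - c)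

def truncAbsInc (f : ℝ → ℝ) (c a b : ℝ) : ℝ≥0∞ := ENNReal.ofReal (|f b - f a| - c)

section Increments

variable {f : ℝ → ℝ} {c a b p q r R : ℝ}

lemma truncInc_neg : truncInc (-f) c a b = truncInc f c b a := by
  simp only [truncInc, Pi.neg_apply, neg_sub_neg]

lemma truncAbsInc_neg : truncAbsInc (-f) c = truncAbsInc f c := by
  ext a b
  simp only [truncAbsInc, Pi.neg_apply, neg_sub_neg, abs_sub_comm]

lemma truncInc_le_truncAbsInc : truncInc f c a b ≤ truncAbsInc f c a b :=
  ENNReal.ofReal_le_ofReal (sub_le_sub_right (le_abs_self _) c)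

lemma truncAbsInc_eq_add (hc : 0 ≤ c) : truncAbsInc f c = truncInc f c + truncInc (-f) c := by
  ext a b
  simp only [truncAbsInc, Pi.add_apply, truncInc, Pi.neg_apply, neg_sub_neg]
  rcases le_total 0 (f b - f a) with h | h
  · rw [abs_of_nonneg h, ENNReal.ofReal_of_nonpos (by linarith : f a - f b - c ≤ 0), add_zero]
  · rw [abs_of_nonpos h, ENNReal.ofReal_of_nonpos (by linarith : f b - f a - c ≤ 0), zero_add,
      neg_sub]

lemma truncInc_add_truncInc_neg_le (hA : 0 ≤ f b - f a - c) (hB : 0 ≤ f p - f q - c) :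
    truncInc f c a b + truncInc (-f) c p q ≤ truncInc f c a p + truncInc (-f) c b q := by
  simp only [truncInc, Pi.neg_apply, neg_sub_neg]
  rw [← ENNReal.ofReal_add hA hB,
    show f b - f a - c + (f p - f q - c) = (f p - f a - c) + (f b - f q - c) by ring]
  exact ENNReal.ofReal_add_le

lemma TVtrunc_eq_chainSup : TVtrunc f c R = chainSup (truncAbsInc f c) R := rfl

lemma UTVtrunc_eq_chainSup : UTVtrunc f c R = chainSup (truncInc f c) R := rfl

lemma DTVtrunc_eq_UTVtrunc_neg : DTVtrunc f c R = UTVtrunc (-f) c R := by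
  simp only [DTVtrunc, UTVtrunc, Pi.neg_apply, neg_sub_neg]

lemma TVtrunc_neg : TVtrunc (-f) c R = TVtrunc f c R := by
  rw [TVtrunc_eq_chainSup, truncAbsInc_neg, TVtrunc_eq_chainSup]

lemma TVtrunc_add_truncInc_neg_le (hr : 0 ≤ r) (hrq : r ≤ q) (hqR : q ≤ R) :
    TVtrunc f c r + truncInc (-f) c r q ≤ TVtrunc f c R :=
  calc TVtrunc f c r + truncInc (-f) c r q
      ≤ chainSup (truncAbsInc f c) r + truncAbsInc f c r q :=
        add_le_add le_rfl (truncInc_le_truncAbsInc.trans_eq (congrFun₂ truncAbsInc_neg r q))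
    _ ≤ TVtrunc f c R := chainSup_add_apply_le le_rfl hr hrq hqR

end Increments

def UpDownBound (f : ℝ → ℝ) (c : ℝ) (n m : ℕ) : Prop :=
  ∀ ⦃R : ℝ⦄ ⦃s u : ℕ → ℝ⦄, Monotone s → Monotone u → (∀ i, s i ∈ Icc 0 R) →
    (∀ i, u i ∈ Icc 0 R) →
    chainSum (truncInc f c) n s + chainSum (truncInc (-f) c) m u ≤ TVtrunc f c R

namespace UpDownBound

variable {f : ℝ → ℝ} {c R : ℝ} {k l m n : ℕ} {s u : ℕ → ℝ}

lemma neg (h : UpDownBound f c n m) : UpDownBound (-f) c m n := by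
  intro R s u hs hu hsR huR
  rw [neg_neg, TVtrunc_neg, add_comm]
  exact h hu hs huR hsR

lemma of_neg (h : UpDownBound (-f) c m n) : UpDownBound f c n m := by
  simpa only [neg_neg] using h.neg

lemma zero_left : UpDownBound f c 0 m := by
  intro R s u _ hu _ huR
  rw [chainSum, Finset.sum_range_zero, zero_add, ← TVtrunc_neg, TVtrunc_eq_chainSup]
  exact (chainSum_mono (fun _ _ => truncInc_le_truncAbsInc) m u).trans (le_chainSup hu huR m)

lemma add_le_of_up_end_le_down_start (h : UpDownBound f c n l) (hs : Monotone s) (hu : Monotone u)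
    (hsR : ∀ i, s i ∈ Icc 0 R) (huR : ∀ i, u i ∈ Icc 0 R) (hsn : s n ≤ u l) :
    chainSum (truncInc f c) n s + chainSum (truncInc (-f) c) (l + 1) u ≤ TVtrunc f c R :=
  calc chainSum (truncInc f c) n s + chainSum (truncInc (-f) c) (l + 1) u
      = chainSum (truncInc f c) n (withTail s n (s n))
          + chainSum (truncInc (-f) c) l (withTail u l (u l))
          + truncInc (-f) c (u l) (u (l + 1)) := by
        rw [chainSum_withTail, chainSum_withTail, chainSum_succ, add_assoc]
    _ ≤ TVtrunc f c (u l) + truncInc (-f) c (u l) (u (l + 1)) := by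
        gcongr
        exact h (hs.withTail le_rfl) (hu.withTail le_rfl)
          (withTail_mem_Icc hs (hsR 0).1 le_rfl hsn) (withTail_mem_Icc hu (huR 0).1 le_rfl le_rfl)
    _ ≤ TVtrunc f c R := TVtrunc_add_truncInc_neg_le (huR l).1 (hu l.le_succ) (huR _).2

lemma add_le_of_exchange (hX : chainSum (truncInc f c) k s + chainSum (truncInc (-f) c) l u
      + truncInc f c (s k) (u l) ≤ TVtrunc f c (s (k + 1)))
    (hA : 0 ≤ f (s (k + 1)) - f (s k) - c) (hB : 0 ≤ f (u l) - f (u (l + 1)) - c)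
    (hb : 0 ≤ s (k + 1)) (hbq : s (k + 1) ≤ u (l + 1)) (hqR : u (l + 1) ≤ R) :
    chainSum (truncInc f c) (k + 1) s + chainSum (truncInc (-f) c) (l + 1) u ≤ TVtrunc f c R :=
  calc chainSum (truncInc f c) (k + 1) s + chainSum (truncInc (-f) c) (l + 1) u
      = chainSum (truncInc f c) k s + chainSum (truncInc (-f) c) l u
          + (truncInc f c (s k) (s (k + 1)) + truncInc (-f) c (u l) (u (l + 1))) := by
        rw [chainSum_succ, chainSum_succ, add_add_add_comm]
    _ ≤ chainSum (truncInc f c) k s + chainSum (truncInc (-f) c) l u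
          + (truncInc f c (s k) (u l) + truncInc (-f) c (s (k + 1)) (u (l + 1))) := by
        gcongr 1
        exact truncInc_add_truncInc_neg_le hA hB
    _ ≤ TVtrunc f c (s (k + 1)) + truncInc (-f) c (s (k + 1)) (u (l + 1)) := by
        rw [← add_assoc]
        gcongr
    _ ≤ TVtrunc f c R := TVtrunc_add_truncInc_neg_le hb hbq hqR

lemma exchanged_le_of_up_start_le (h : UpDownBound f c (k + 1) l) (hs : Monotone s)
    (hu : Monotone u) (hsR : ∀ i, s i ∈ Icc 0 R) (huR : ∀ i, u i ∈ Icc 0 R) (hap : s k ≤ u l)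
    (hpb : u l ≤ s (k + 1)) :
    chainSum (truncInc f c) k s + chainSum (truncInc (-f) c) l u
      + truncInc f c (s k) (u l) ≤ TVtrunc f c (s (k + 1)) := by
  have := h (hs.withTail hap) (hu.withTail le_rfl) (withTail_mem_Icc hs (hsR 0).1 hap hpb)
    (withTail_mem_Icc hu (huR 0).1 le_rfl hpb)
  rwa [chainSum_succ_withTail, chainSum_withTail, add_right_comm] at this

lemma exchanged_le_of_down_start_le (h : UpDownBound f c k (l + 1)) (hs : Monotone s)
    (hu : Monotone u) (hsR : ∀ i, s i ∈ Icc 0 R) (huR : ∀ i, u i ∈ Icc 0 R) (hpa : u l ≤ s k) :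
    chainSum (truncInc f c) k s + chainSum (truncInc (-f) c) l u
      + truncInc f c (s k) (u l) ≤ TVtrunc f c (s (k + 1)) := by
  have hab : s k ≤ s (k + 1) := hs k.le_succ
  have := h (hs.withTail le_rfl) (hu.withTail hpa) (withTail_mem_Icc hs (hsR 0).1 le_rfl hab)
    (withTail_mem_Icc hu (huR 0).1 hpa hab)
  rwa [chainSum_withTail, chainSum_succ_withTail, truncInc_neg, ← add_assoc] at this

lemma add_le_of_up_end_le_down_end (h₁ : UpDownBound f c (k + 1) l)
    (h₂ : UpDownBound f c k (l + 1)) (hs : Monotone s) (hu : Monotone u)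
    (hsR : ∀ i, s i ∈ Icc 0 R) (huR : ∀ i, u i ∈ Icc 0 R) (hbq : s (k + 1) ≤ u (l + 1)) :
    chainSum (truncInc f c) (k + 1) s + chainSum (truncInc (-f) c) (l + 1) u ≤ TVtrunc f c R := by
  rcases le_or_gt (f (s (k + 1)) - f (s k) - c) 0 with hA | hA
  · rw [chainSum_succ, truncInc, ENNReal.ofReal_of_nonpos hA, add_zero]
    exact h₂ hs hu hsR huR
  rcases le_or_gt (f (u l) - f (u (l + 1)) - c) 0 with hB | hB
  · rw [chainSum_succ (truncInc (-f) c), truncInc_neg, truncInc, ENNReal.ofReal_of_nonpos hB,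
      add_zero]
    exact h₁ hs hu hsR huR
  rcases le_total (s (k + 1)) (u l) with hbp | hpb
  · exact h₁.add_le_of_up_end_le_down_start hs hu hsR huR hbp
  refine add_le_of_exchange ?_ hA.le hB.le (hsR _).1 hbq (huR _).2
  rcases le_total (s k) (u l) with hap | hpa
  · exact h₁.exchanged_le_of_up_start_le hs hu hsR huR hap hpb
  · exact h₂.exchanged_le_of_down_start_le hs hu hsR huR hpa

lemma succ_succ (h₁ : UpDownBound f c (k + 1) l) (h₂ : UpDownBound f c k (l + 1)) :
    UpDownBound f c (k + 1) (l + 1) := by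
  intro R s u hs hu hsR huR
  rcases le_total (s (k + 1)) (u (l + 1)) with hbq | hqb
  · exact add_le_of_up_end_le_down_end h₁ h₂ hs hu hsR huR hbq
  · have := add_le_of_up_end_le_down_end h₂.neg h₁.neg hu hs huR hsR hqb
    rwa [neg_neg, TVtrunc_neg, add_comm] at this

end UpDownBound

theorem upDownBound (f : ℝ → ℝ) (c : ℝ) : ∀ n m, UpDownBound f c n m
  | 0, _ => .zero_left
  | _ + 1, 0 => .of_neg .zero_left
  | k + 1, l + 1 => (upDownBound f c (k + 1) l).succ_succ (upDownBound f c k (l + 1))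

lemma UTVtrunc_add_UTVtrunc_neg_le (f : ℝ → ℝ) (c R : ℝ) :
    UTVtrunc f c R + UTVtrunc (-f) c R ≤ TVtrunc f c R := by
  rw [UTVtrunc_eq_chainSup, UTVtrunc_eq_chainSup]
  exact chainSup_add_chainSup_le fun n m _ _ hs hu hsR huR => upDownBound f c n m hs hu hsR huR

theorem stmt_7_general (X : ℝ → ℝ) (c : ℝ) (hc : 0 ≤ c) (T : ℝ) :
    TVtrunc X c T = UTVtrunc X c T + DTVtrunc X c T := by
  rw [DTVtrunc_eq_UTVtrunc_neg]
  refine le_antisymm ?_ (UTVtrunc_add_UTVtrunc_neg_le X c T)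
  rw [TVtrunc_eq_chainSup, truncAbsInc_eq_add hc]
  exact chainSup_add_le_add _ _ T

/-- Jordan-type decomposition of the truncated variation:
`TV^c = UTV^c + DTV^c`. -/
theorem stmt_7 (X : ℝ → ℝ) (hX : Cadlag X) (c : ℝ) (hc : 0 ≤ c) (T : ℝ) (hT : 0 ≤ T) :
    TVtrunc X c T = UTVtrunc X c T + DTVtrunc X c T :=
  stmt_7_general X c hc T
end
end

section
/- Let B be a standard Brownian motion, α(n) = β(n)^{1/2}, γ(n) = β(n)^{−1} with β as in the recursive definition, and B^{γ(n)} the finite-variation approximation of B satisfying |B − B^{γ(n)}| ≤ γ(n). Then the series Y = Σ_{n=2}^∞ α(n)(B − B^{γ(n)}) converges uniformly on [0,∞) to a bounded continuous process adapted to the natural filtration of B, with |α(n)(B − B^{γ(n)})| ≤ γ(n)^{1/2} for each n. -/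
/-!
Since `β(n) = n² β(n-1)⁶ ≥ 4 β(n-1)` for `n ≥ 2`, `β(n)` grows at least like `4ⁿ`.
The `n`-th term is bounded by `α(n) γ(n) = β(n)^{-1/2} ≤ 2 ⋅ 2⁻ⁿ`, so the Weierstrass
M-test gives uniform convergence, a uniform bound and continuity of the sum, and measurability with
respect to `naturalSigma B t` passes from the partial sums to their pointwise limit.
-/

open Set Filter MeasureTheory
open scoped ENNReal NNReal Topology

noncomputable section

theorem four_pow_le_four_mul_of_recursion {β : ℕ → ℝ} (hβ1 : β 1 = 1)
    (hβ : ∀ n : ℕ, 2 ≤ n → β n = (n : ℝ) ^ 2 * β (n - 1) ^ 6) {n : ℕ}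
    (hn : 1 ≤ n) :
    (4 : ℝ) ^ n ≤ 4 * β n := by
  induction n, hn using Nat.le_induction with
  | base => simp [hβ1]
  | succ n hn ih =>
    have h4 : (4 : ℝ) ≤ 4 ^ n := le_self_pow₀ (by norm_num) (by omega)
    have hβn : 1 ≤ β n := by linarith
    have hsq : (4 : ℝ) ≤ ((n + 1 : ℕ) : ℝ) ^ 2 := by
      have : (2 : ℝ) ≤ ((n + 1 : ℕ) : ℝ) := by exact_mod_cast (by omega : 2 ≤ n + 1)
      nlinarith
    have hsix : β n ≤ β n ^ 6 := le_self_pow₀ hβn (by norm_num)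
    calc (4 : ℝ) ^ (n + 1) = 4 * 4 ^ n := by ring
      _ ≤ 4 * (4 * β n) := by gcongr
      _ ≤ 4 * (((n + 1 : ℕ) : ℝ) ^ 2 * β n ^ 6) := by gcongr
      _ = 4 * β (n + 1) := by rw [hβ (n + 1) (by omega), Nat.add_sub_cancel]

theorem Real.sqrt_inv_le_of_four_pow_le {b : ℝ} {n : ℕ} (h : (4 : ℝ) ^ n ≤ 4 * b) :
    √b⁻¹ ≤ 2 * (1 / 2) ^ n := by
  have hb : 0 < b := by have := pow_pos (by norm_num : (0 : ℝ) < 4) n; linarith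
  rw [Real.sqrt_le_left (by positivity), inv_le_comm₀ hb (by positivity)]
  have hsq : (2 * (1 / 2 : ℝ) ^ n) ^ 2 = 4 / 4 ^ n := by
    rw [one_div_pow, mul_one_div, div_pow, ← pow_mul, mul_comm n 2, pow_mul]; norm_num
  rw [hsq, inv_div]
  linarith

theorem abs_sqrt_mul_le_sqrt_inv {b x : ℝ} (hb : 0 < b) (hx : |x| ≤ b⁻¹) :
    |√b * x| ≤ √b⁻¹ :=
  calc |√b * x| = √b * |x| := by rw [abs_mul, abs_of_nonneg (Real.sqrt_nonneg b)]
    _ ≤ √b * b⁻¹ := by gcongr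
    _ = √b⁻¹ := by rw [← div_eq_mul_inv, Real.sqrt_div_self, Real.sqrt_inv]

theorem measurable_tsum_of_summable {α E : Type*} {mα : MeasurableSpace α} [AddCommMonoid E]
    [TopologicalSpace E] [ContinuousAdd E] [TopologicalSpace.PseudoMetrizableSpace E]
    [SecondCountableTopology E] [MeasurableSpace E] [BorelSpace E]
    {f : ℕ → α → E} (hf : ∀ n, Measurable (f n)) (hsum : ∀ x, Summable fun n => f n x) :
    Measurable fun x => ∑' n, f n x :=
  measurable_of_tendsto_metrizable (fun _ => Finset.measurable_sum _ fun n _ => hf n)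
    (tendsto_pi_nhds.2 fun x => (hsum x).hasSum.tendsto_sum_nat)

theorem measurable_naturalSigma_self {Ω : Type*} (B : ℝ → Ω → ℝ) (t : ℝ) :
    Measurable[naturalSigma B t] (B t) :=
  measurable_iff_comap_le.2 <|
    le_biSup (fun s => MeasurableSpace.comap (B s) inferInstance) (mem_Iic.2 le_rfl)

theorem stmt_15_general {Ω : Type*} [m : MeasurableSpace Ω] (P : Measure Ω)
    (B : ℝ → Ω → ℝ) (hB : IsStandardBM P B)
    (β : ℕ → ℝ) (hβ1 : β 1 = 1)
    (hβ : ∀ n : ℕ, 2 ≤ n → β n = (n : ℝ) ^ 2 * β (n - 1) ^ 6)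
    (α γ : ℕ → ℝ) (hα : ∀ n, α n = Real.sqrt (β n)) (hγ : ∀ n, γ n = (β n)⁻¹)
    (Bc : ℝ → ℝ → Ω → ℝ)
    (happrox : ∀ c > (0 : ℝ), ∀ t ω, |B t ω - Bc c t ω| ≤ c)
    (hcont : ∀ c > (0 : ℝ), ∀ ω, Continuous fun t => Bc c t ω)
    (hadp : ∀ c > (0 : ℝ), ∀ t : ℝ, Measurable[naturalSigma B t] (Bc c t))
    (Y : ℝ → Ω → ℝ)
    (hYdef : ∀ t ω, Y t ω =
      ∑' n : ℕ, if 2 ≤ n then α n * (B t ω - Bc (γ n) t ω) else 0) :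
    (∀ n : ℕ, 2 ≤ n → ∀ t ω,
      |α n * (B t ω - Bc (γ n) t ω)| ≤ Real.sqrt (γ n)) ∧
    (∀ ω, TendstoUniformly
      (fun N t => ∑ n ∈ Finset.range N,
        if 2 ≤ n then α n * (B t ω - Bc (γ n) t ω) else 0)
      (fun t => Y t ω) atTop) ∧
    (∃ C : ℝ, ∀ t ω, |Y t ω| ≤ C) ∧
    (∀ ω, Continuous fun t => Y t ω) ∧
    (∀ t : ℝ, Measurable[naturalSigma B t] (Y t)) := by
  have hβ4 : ∀ n, 2 ≤ n → (4 : ℝ) ^ n ≤ 4 * β n :=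
    fun n hn => four_pow_le_four_mul_of_recursion hβ1 hβ (by omega)
  have hβpos : ∀ n, 2 ≤ n → 0 < β n :=
    fun n hn => by linarith [hβ4 n hn, pow_pos (by norm_num : (0 : ℝ) < 4) n]
  have hγpos : ∀ n, 2 ≤ n → 0 < γ n := fun n hn => hγ n ▸ inv_pos.2 (hβpos n hn)
  have hterm : ∀ n, 2 ≤ n → ∀ t ω, |α n * (B t ω - Bc (γ n) t ω)| ≤ √(γ n) :=
    fun n hn t ω => by
      rw [hα, hγ]
      exact abs_sqrt_mul_le_sqrt_inv (hβpos n hn) (hγ n ▸ happrox _ (hγpos n hn) t ω)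
  set f : ℕ → ℝ → Ω → ℝ :=
    fun n t ω => if 2 ≤ n then α n * (B t ω - Bc (γ n) t ω) else 0
  have hf_le : ∀ n t ω, ‖f n t ω‖ ≤ 2 * (1 / 2) ^ n := fun n t ω => by
    by_cases hn : 2 ≤ n
    · simp only [f, if_pos hn, Real.norm_eq_abs]
      exact (hterm n hn t ω).trans (hγ n ▸ Real.sqrt_inv_le_of_four_pow_le (hβ4 n hn))
    · simp only [f, if_neg hn, norm_zero]; positivity
  have hu : Summable fun n : ℕ => 2 * (1 / 2 : ℝ) ^ n :=
    (summable_geometric_of_lt_one (by norm_num) (by norm_num)).mul_left 2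
  have hY : ∀ ω, (fun t => Y t ω) = fun t => ∑' n, f n t ω :=
    fun ω => funext fun t => hYdef t ω
  refine ⟨hterm, fun ω => hY ω ▸ tendstoUniformly_tsum_nat hu fun n t => hf_le n t ω,
    ⟨∑' n : ℕ, 2 * (1 / 2 : ℝ) ^ n, fun t ω => hYdef t ω ▸
      tsum_of_norm_bounded hu.hasSum fun n => hf_le n t ω⟩, fun ω => ?_, fun t => ?_⟩
  · rw [hY]
    refine continuous_tsum (fun n => ?_) hu fun n t => hf_le n t ω
    by_cases hn : 2 ≤ n
    · simp only [f, if_pos hn]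
      exact continuous_const.mul ((hB.2.1 ω).sub (hcont (γ n) (hγpos n hn) ω))
    · simp only [f, if_neg hn]; exact continuous_const
  · rw [show Y t = fun ω => ∑' n, f n t ω from funext (hYdef t)]
    refine measurable_tsum_of_summable (fun n => ?_)
      fun ω => .of_norm_bounded hu fun n => hf_le n t ω
    by_cases hn : 2 ≤ n
    · simp only [f, if_pos hn]
      exact ((measurable_naturalSigma_self B t).sub (hadp (γ n) (hγpos n hn) t)).const_mul (α n)
    · simp only [f, if_neg hn]; exact measurable_const

/-- the series `Y = Σ_{n≥2} α(n)(B − B^{γ(n)})` converges uniformly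
to a bounded continuous process adapted to the natural filtration of `B`, with
`|α(n)(B − B^{γ(n)})| ≤ γ(n)^{1/2}` for each `n ≥ 2`. -/
theorem stmt_15 {Ω : Type*} [m : MeasurableSpace Ω] (P : Measure Ω)
    [IsProbabilityMeasure P] (B : ℝ → Ω → ℝ) (hB : IsStandardBM P B)
    (β : ℕ → ℝ) (hβ1 : β 1 = 1)
    (hβ : ∀ n : ℕ, 2 ≤ n → β n = (n : ℝ) ^ 2 * β (n - 1) ^ 6)
    (α γ : ℕ → ℝ) (hα : ∀ n, α n = Real.sqrt (β n)) (hγ : ∀ n, γ n = (β n)⁻¹)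
    (Bc : ℝ → ℝ → Ω → ℝ)
    (happrox : ∀ c > (0 : ℝ), ∀ t ω, |B t ω - Bc c t ω| ≤ c)
    (hfv : ∀ c > (0 : ℝ), ∀ ω, ∀ T > (0 : ℝ),
      eVariationOn (fun t => Bc c t ω) (Icc 0 T) < ⊤)
    (hcont : ∀ c > (0 : ℝ), ∀ ω, Continuous fun t => Bc c t ω)
    (hadp : ∀ c > (0 : ℝ), ∀ t : ℝ, Measurable[naturalSigma B t] (Bc c t))
    (Y : ℝ → Ω → ℝ)
    (hYdef : ∀ t ω, Y t ω =
      ∑' n : ℕ, if 2 ≤ n then α n * (B t ω - Bc (γ n) t ω) else 0) :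
    (∀ n : ℕ, 2 ≤ n → ∀ t ω,
      |α n * (B t ω - Bc (γ n) t ω)| ≤ Real.sqrt (γ n)) ∧
    (∀ ω, TendstoUniformly
      (fun N t => ∑ n ∈ Finset.range N,
        if 2 ≤ n then α n * (B t ω - Bc (γ n) t ω) else 0)
      (fun t => Y t ω) atTop) ∧
    (∃ C : ℝ, ∀ t ω, |Y t ω| ≤ C) ∧
    (∀ ω, Continuous fun t => Y t ω) ∧
    (∀ t : ℝ, Measurable[naturalSigma B t] (Y t)) :=
  stmt_15_general (m := m) P B hB β hβ1 hβ α γ hα hγ Bc happrox hcont hadp Y hYdef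

end
end
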